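/- arXiv:0810.3540 — 3 statements merged into one kernel-verified Lean document; each statement's English description precedes it below -/
import Mathlib

section
/- Let σ > 0 and Δ ∈ ℝ with τ = Δ/σ. The 4×4 complex matrix Λ = iσ·I + M, where M has entries M₁₄ = M₄₁ = -iσ, M₂₂ = Δ, M₂₃ = M₃₂ = -iσ, M₃₃ = -Δ, and all other entries zero (in the ordered basis e₁,e₂,e₃,e₄), has spectrum {0, 2iσ, iσ + σ√(τ²-1), iσ - σ√(τ²-1)}, where √ denotes the principal branch of the square root. -/
open Complex Matrix

/-- Principal branch of the complex square root (branch cut on the negative real axis). -/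
noncomputable def csqrt (z : ℂ) : ℂ := z ^ ((1 : ℂ) / 2)

/-- The level shift operator `Λ = iσ·1 + M` of the spin-fermion model in the
overlapping resonance regime. -/
noncomputable def levelShift (σ Δ : ℝ) : Matrix (Fin 4) (Fin 4) ℂ :=
  (Complex.I * (σ : ℂ)) • (1 : Matrix (Fin 4) (Fin 4) ℂ) +
  !![0, 0, 0, -(Complex.I * (σ : ℂ));
     0, (Δ : ℂ), -(Complex.I * (σ : ℂ)), 0;
     0, -(Complex.I * (σ : ℂ)), -(Δ : ℂ), 0;
     -(Complex.I * (σ : ℂ)), 0, 0, 0]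

/-!
The level shift operator decouples into two `2 × 2` blocks, on `span {e₁, e₄}` and on
`span {e₂, e₃}`, so `det (x - Λ) = x (x - 2iσ) ((x - iσ)² - (Δ² - σ²))`. For `σ ≠ 0` the
number `σ √(τ² - 1)` is a square root of `Δ² - σ²`, whence the last two eigenvalues.
-/

lemma csqrt_sq (z : ℂ) : csqrt z ^ 2 = z := by
  rw [csqrt, one_div]
  exact_mod_cast cpow_nat_inv_pow z two_ne_zero

lemma Matrix.mem_spectrum_iff_det_scalar_sub_eq_zero {n K : Type*} [Fintype n] [DecidableEq n]
    [Field K] (A : Matrix n n K) (x : K) :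
    x ∈ spectrum K A ↔ (scalar n x - A).det = 0 := by
  rw [mem_spectrum_iff_isRoot_charpoly, Polynomial.IsRoot.def, eval_charpoly]

lemma sub_sq_sub_sq_eq_zero_iff {R : Type*} [CommRing R] [NoZeroDivisors R] (x a s : R) :
    (x - a) ^ 2 - s ^ 2 = 0 ↔ x = a + s ∨ x = a - s := by
  rw [sq_sub_sq, mul_eq_zero, or_comm]
  congr! 1 <;> constructor <;> intro h <;> linear_combination h

lemma scalar_sub_levelShift (σ Δ : ℝ) (x : ℂ) :
    scalar (Fin 4) x - levelShift σ Δ =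
      !![x - I * σ, 0, 0, I * σ;
         0, x - I * σ - Δ, I * σ, 0;
         0, I * σ, x - I * σ + Δ, 0;
         I * σ, 0, 0, x - I * σ] := by
  ext i j
  fin_cases i <;> fin_cases j <;> simp [levelShift, sub_add_eq_sub_sub]

lemma det_scalar_sub_levelShift (σ Δ : ℝ) (x : ℂ) :
    (scalar (Fin 4) x - levelShift σ Δ).det =
      x * (x - 2 * I * σ) * ((x - I * σ) ^ 2 - (Δ ^ 2 - σ ^ 2)) := by
  rw [scalar_sub_levelShift, det_succ_row_zero]
  simp only [Nat.reduceAdd, of_apply, det_fin_three, submatrix_apply, Fin.succ, Nat.zero_mod,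
    Fin.succAbove, Fin.castSucc, Fin.reduceCastAdd, Fin.reduceFinMk, cons_val, Nat.mod_succ,
    Fin.sum_univ_succ, Fin.coe_ofNat_eq_mod, ↓reduceIte, cons_val_succ', Fin.reduceLT,
    Finset.univ_unique, Fin.val_eq_zero, Finset.sum_const, Finset.card_singleton]
  linear_combination (2 * x * I * (σ : ℂ) ^ 3 - x ^ 2 * (σ : ℂ) ^ 2) * I_sq

lemma ofReal_mul_csqrt_sq (σ Δ : ℝ) (hσ : σ ≠ 0) :
    ((σ : ℂ) * csqrt (((Δ / σ : ℝ) : ℂ) ^ 2 - 1)) ^ 2 = Δ ^ 2 - σ ^ 2 := by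
  have : (σ : ℂ) ≠ 0 := ofReal_ne_zero.mpr hσ
  rw [mul_pow, csqrt_sq]
  push_cast
  field_simp

theorem spectrum_levelShift (σ Δ : ℝ) (hσ : 0 < σ) :
    spectrum ℂ (levelShift σ Δ) =
      {0, 2 * Complex.I * (σ : ℂ),
       Complex.I * (σ : ℂ) + (σ : ℂ) * csqrt (((Δ / σ : ℝ) : ℂ) ^ 2 - 1),
       Complex.I * (σ : ℂ) - (σ : ℂ) * csqrt (((Δ / σ : ℝ) : ℂ) ^ 2 - 1)} := by
  ext x
  rw [mem_spectrum_iff_det_scalar_sub_eq_zero, det_scalar_sub_levelShift,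
    ← ofReal_mul_csqrt_sq σ Δ hσ.ne', mul_eq_zero, mul_eq_zero, sub_eq_zero,
    sub_sq_sub_sq_eq_zero_iff]
  simp only [Set.mem_insert_iff, Set.mem_singleton_iff, or_assoc]
end

section
/- Let τ ∈ ℝ with τ² ≠ 1, y± = -iτ ± i√(τ²-1), α± = (1 + (conj(y±))²)⁻¹. Define η(3) = e₂ + y₊ e₃, η(4) = e₂ + y₋ e₃, η̃(3) = α₊(e₂ + conj(y₊)e₃) and η̃(4) = α₋(e₂ + conj(y₋)e₃), where the inner product ⟨u,v⟩ on ℂ⁴ is conjugate-linear in the first argument. Then ⟨η̃(3), η(3)⟩ = 1, ⟨η̃(4), η(4)⟩ = 1, ⟨η̃(3), η(4)⟩ = 0, and ⟨η̃(4), η(3)⟩ = 0. -/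
open Complex Finset

/-- `y₊(τ) = -iτ + i√(τ²-1)`. -/
noncomputable def yPlus (τ : ℝ) : ℂ :=
  -Complex.I * (τ : ℂ) + Complex.I * csqrt ((τ : ℂ) ^ 2 - 1)

/-- `y₋(τ) = -iτ - i√(τ²-1)`. -/
noncomputable def yMinus (τ : ℝ) : ℂ :=
  -Complex.I * (τ : ℂ) - Complex.I * csqrt ((τ : ℂ) ^ 2 - 1)

/-- `α₊(τ) = (1 + (conj y₊(τ))²)⁻¹`. -/
noncomputable def alphaPlus (τ : ℝ) : ℂ := (1 + (starRingEnd ℂ (yPlus τ)) ^ 2)⁻¹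

/-- `α₋(τ) = (1 + (conj y₋(τ))²)⁻¹`. -/
noncomputable def alphaMinus (τ : ℝ) : ℂ := (1 + (starRingEnd ℂ (yMinus τ)) ^ 2)⁻¹

/-- Inner product on ℂ⁴, conjugate-linear in the first argument. -/
noncomputable def ip (u v : Fin 4 → ℂ) : ℂ := ∑ i : Fin 4, starRingEnd ℂ (u i) * v i

/-- `η(3) = e₂ + y₊ e₃`. -/
noncomputable def eta3 (τ : ℝ) : Fin 4 → ℂ := ![0, 1, yPlus τ, 0]

/-- `η(4) = e₂ + y₋ e₃`. -/
noncomputable def eta4 (τ : ℝ) : Fin 4 → ℂ := ![0, 1, yMinus τ, 0]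

/-- `η̃(3) = α₊(e₂ + conj(y₊) e₃)`. -/
noncomputable def etaTilde3 (τ : ℝ) : Fin 4 → ℂ :=
  alphaPlus τ • ![0, 1, starRingEnd ℂ (yPlus τ), 0]

/-- `η̃(4) = α₋(e₂ + conj(y₋) e₃)`. -/
noncomputable def etaTilde4 (τ : ℝ) : Fin 4 → ℂ :=
  alphaMinus τ • ![0, 1, starRingEnd ℂ (yMinus τ), 0]

theorem biorthonormality (τ : ℝ) (hτ : τ ^ 2 ≠ 1) :
    (1 + (starRingEnd ℂ (yPlus τ)) ^ 2 ≠ 0) ∧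
    (1 + (starRingEnd ℂ (yMinus τ)) ^ 2 ≠ 0) ∧
    ip (etaTilde3 τ) (eta3 τ) = 1 ∧
    ip (etaTilde4 τ) (eta4 τ) = 1 ∧
    ip (etaTilde3 τ) (eta4 τ) = 0 ∧
    ip (etaTilde4 τ) (eta3 τ) = 0 := by
  have hz : ((τ : ℂ) ^ 2 - 1) ≠ 0 := by
    intro h
    apply hτ
    have h2 : ((τ ^ 2 - 1 : ℝ) : ℂ) = 0 := by push_cast; linear_combination h
    have := Complex.ofReal_eq_zero.mp h2
    linarith
  set s : ℂ := csqrt ((τ : ℂ) ^ 2 - 1) with hs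
  have hs2 : s ^ 2 = (τ : ℂ) ^ 2 - 1 := by
    rw [hs]; unfold csqrt
    rw [sq, ← Complex.cpow_add _ _ hz]
    norm_num
  have hs0 : s ≠ 0 := by
    intro h
    apply hz
    rw [← hs2, h]; ring
  have hts : (τ : ℂ) - s ≠ 0 := by
    intro h
    apply (one_ne_zero : (1 : ℂ) ≠ 0)
    linear_combination hs2 + ((τ : ℂ) + s) * h
  have hts' : (τ : ℂ) + s ≠ 0 := by
    intro h
    apply (one_ne_zero : (1 : ℂ) ≠ 0)
    linear_combination hs2 + ((τ : ℂ) - s) * h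
  have hP : 1 + (yPlus τ) ^ 2 = 2 * s * ((τ : ℂ) - s) := by
    unfold yPlus; rw [← hs]
    linear_combination hs2 + (s - (τ : ℂ)) ^ 2 * Complex.I_sq
  have hM : 1 + (yMinus τ) ^ 2 = -(2 * s * ((τ : ℂ) + s)) := by
    unfold yMinus; rw [← hs]
    linear_combination hs2 + (s + (τ : ℂ)) ^ 2 * Complex.I_sq
  have hPM : yPlus τ * yMinus τ = -1 := by
    unfold yPlus yMinus; rw [← hs]
    linear_combination hs2 + ((τ : ℂ) ^ 2 - s ^ 2) * Complex.I_sq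
  have hP0 : 1 + (yPlus τ) ^ 2 ≠ 0 := by
    rw [hP]
    exact mul_ne_zero (mul_ne_zero two_ne_zero hs0) hts
  have hM0 : 1 + (yMinus τ) ^ 2 ≠ 0 := by
    rw [hM]
    exact neg_ne_zero.mpr (mul_ne_zero (mul_ne_zero two_ne_zero hs0) hts')
  have hcP : 1 + (starRingEnd ℂ (yPlus τ)) ^ 2 = starRingEnd ℂ (1 + (yPlus τ) ^ 2) := by
    simp
  have hcM : 1 + (starRingEnd ℂ (yMinus τ)) ^ 2 = starRingEnd ℂ (1 + (yMinus τ) ^ 2) := by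
    simp
  have hcP0 : 1 + (starRingEnd ℂ (yPlus τ)) ^ 2 ≠ 0 := by
    rw [hcP]
    exact (map_ne_zero_iff _ (starRingEnd ℂ).injective).mpr hP0
  have hcM0 : 1 + (starRingEnd ℂ (yMinus τ)) ^ 2 ≠ 0 := by
    rw [hcM]
    exact (map_ne_zero_iff _ (starRingEnd ℂ).injective).mpr hM0
  have haP : starRingEnd ℂ (alphaPlus τ) = (1 + (yPlus τ) ^ 2)⁻¹ := by
    rw [alphaPlus, map_inv₀, hcP, Complex.conj_conj]
  have haM : starRingEnd ℂ (alphaMinus τ) = (1 + (yMinus τ) ^ 2)⁻¹ := by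
    rw [alphaMinus, map_inv₀, hcM, Complex.conj_conj]
  refine ⟨hcP0, hcM0, ?_, ?_, ?_, ?_⟩
  · simp only [ip, etaTilde3, eta3, Pi.smul_apply, smul_eq_mul, Fin.sum_univ_four,
      Matrix.cons_val_zero, Matrix.cons_val_one, Matrix.head_cons, Matrix.cons_val_two,
      Matrix.tail_cons, Matrix.cons_val_three, map_mul, Complex.conj_conj, map_one, map_zero,
      haP]
    field_simp
    ring
  · simp only [ip, etaTilde4, eta4, Pi.smul_apply, smul_eq_mul, Fin.sum_univ_four,
      Matrix.cons_val_zero, Matrix.cons_val_one, Matrix.head_cons, Matrix.cons_val_two,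
      Matrix.tail_cons, Matrix.cons_val_three, map_mul, Complex.conj_conj, map_one, map_zero,
      haM]
    field_simp
    ring
  · simp only [ip, etaTilde3, eta4, Pi.smul_apply, smul_eq_mul, Fin.sum_univ_four,
      Matrix.cons_val_zero, Matrix.cons_val_one, Matrix.head_cons, Matrix.cons_val_two,
      Matrix.tail_cons, Matrix.cons_val_three, map_mul, Complex.conj_conj, map_one, map_zero,
      haP]
    have key : 1 + yPlus τ * yMinus τ = 0 := by rw [hPM]; ring
    field_simp
    linear_combination key
  · simp only [ip, etaTilde4, eta3, Pi.smul_apply, smul_eq_mul, Fin.sum_univ_four,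
      Matrix.cons_val_zero, Matrix.cons_val_one, Matrix.head_cons, Matrix.cons_val_two,
      Matrix.tail_cons, Matrix.cons_val_three, map_mul, Complex.conj_conj, map_one, map_zero,
      haM]
    have key : 1 + yMinus τ * yPlus τ = 0 := by rw [mul_comm, hPM]; ring
    field_simp
    linear_combination key
end

section
/- Let y : [0,t] → ℂ be continuously differentiable with 1 + y(s)² ≠ 0 for all s ∈ [0,t]. For N ∈ ℕ, set Pₙ = ∏_{j=1}^{N-1} [1 + (y(jt/N)/(1+y(jt/N)²))·(y((j+1)t/N) - y(jt/N))]. If the factors are all nonzero for large N, then Pₙ converges as N → ∞ to exp(∫₀ᵗ y(s)y'(s)/(1+y(s)²) ds). -/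
/-!
Write the factors as `1 + a N j` with `a N j = g (s j) * (y (s (j + 1)) - y (s j))`, where
`g = y / (1 + y ^ 2)` and `s j = j * t / N`. Since `y` is `C¹` on `[0, t]`, `a N j = O(1 / N)`
uniformly in `j`, so once `‖a N j‖ ≤ 1 / 2` the principal logarithm gives
`∏ (1 + a N j) = exp (∑ log (1 + a N j))` with `∑ log (1 + a N j) = ∑ a N j + O(1 / N)`; no choice of
branch is involved. Finally `∑ a N j` is a Riemann–Stieltjes sum for `∫ g dy = ∫ g y'`, and it
converges because `g` is uniformly continuous and `y'` is bounded.
-/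

open Complex Filter Finset

open scoped Topology

theorem Complex.norm_log_one_add_sub_self_le_sq {z : ℂ} (hz : ‖z‖ ≤ 1 / 2) :
    ‖log (1 + z) - z‖ ≤ ‖z‖ ^ 2 := by
  have hinv : (1 - ‖z‖)⁻¹ ≤ 2 := by
    rw [inv_le_comm₀ (by linarith) two_pos]
    linarith
  calc ‖log (1 + z) - z‖ ≤ ‖z‖ ^ 2 * (1 - ‖z‖)⁻¹ / 2 :=
        norm_log_one_add_sub_self_le (hz.trans_lt one_half_lt_one)
    _ ≤ ‖z‖ ^ 2 * 2 / 2 := by gcongr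
    _ = ‖z‖ ^ 2 := by ring

theorem tendsto_prod_one_add_of_tendsto_sum {ι : Type*} {s : ℕ → Finset ι} {a : ℕ → ι → ℂ}
    {C : ℝ} {L : ℂ} (hcard : ∀ N, #(s N) ≤ N) (ha : ∀ᶠ N in atTop, ∀ j ∈ s N, ‖a N j‖ ≤ C / N)
    (hsum : Tendsto (fun N => ∑ j ∈ s N, a N j) atTop (𝓝 L)) :
    Tendsto (fun N => ∏ j ∈ s N, (1 + a N j)) atTop (𝓝 (exp L)) := by
  have hsmall : ∀ᶠ N : ℕ in atTop, ∀ j ∈ s N, ‖a N j‖ ≤ 1 / 2 := by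
    filter_upwards [ha, (tendsto_const_div_atTop_nhds_zero_nat C).eventually_le_const
      one_half_pos] with N haN hCN j hj using (haN j hj).trans hCN
  have herr : Tendsto (fun N => ∑ j ∈ s N, (log (1 + a N j) - a N j)) atTop (𝓝 0) := by
    refine squeeze_zero_norm' ?_ (tendsto_const_div_atTop_nhds_zero_nat (C ^ 2))
    filter_upwards [ha, hsmall] with N haN hsmallN
    calc ‖∑ j ∈ s N, (log (1 + a N j) - a N j)‖ ≤ ∑ j ∈ s N, ‖a N j‖ ^ 2 :=
          (norm_sum_le _ _).trans
            (sum_le_sum fun j hj => norm_log_one_add_sub_self_le_sq (hsmallN j hj))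
      _ ≤ #(s N) • (C / N) ^ 2 :=
          sum_le_card_nsmul _ _ _ fun j hj => pow_le_pow_left₀ (norm_nonneg _) (haN j hj) 2
      _ ≤ N * (C / N) ^ 2 := by
          rw [nsmul_eq_mul]
          gcongr
          exact_mod_cast hcard N
      _ = C ^ 2 / N := by
          rcases N.eq_zero_or_pos with rfl | hN
          · simp
          · field_simp
  have hlog : Tendsto (fun N => ∑ j ∈ s N, log (1 + a N j)) atTop (𝓝 L) := by
    simpa [← sum_add_distrib] using hsum.add herr
  refine ((continuous_exp.tendsto L).comp hlog).congr' ?_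
  filter_upwards [hsmall] with N hsmallN
  rw [Function.comp_apply, exp_sum]
  refine prod_congr rfl fun j hj => exp_log fun h => ?_
  have := hsmallN j hj
  rw [eq_neg_of_add_eq_zero_right h, norm_neg, norm_one] at this
  norm_num at this

theorem ContDiffOn.integral_derivWithin_Icc_eq_sub {E : Type*} [NormedAddCommGroup E]
    [NormedSpace ℝ E] [CompleteSpace E] {y : ℝ → E} {s t a b : ℝ}
    (hy : ContDiffOn ℝ 1 y (Set.Icc s t)) (hsa : s ≤ a) (hab : a ≤ b) (hbt : b ≤ t) :
    ∫ x in a..b, derivWithin y (Set.Icc s t) x = y b - y a := by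
  rcases hab.eq_or_lt with rfl | hab'
  · simp
  have hsub : Set.Icc a b ⊆ Set.Icc s t := Set.Icc_subset_Icc hsa hbt
  refine intervalIntegral.integral_eq_sub_of_hasDerivAt_of_le hab (hy.continuousOn.mono hsub)
    (fun x hx => ?_) ?_
  · exact (hy.differentiableOn one_ne_zero x (hsub (Set.Ioo_subset_Icc_self hx))).hasDerivWithinAt
      |>.hasDerivAt (Icc_mem_nhds (hsa.trans_lt hx.1) (hx.2.trans_le hbt))
  · exact ((hy.continuousOn_derivWithin (uniqueDiffOn_Icc (by linarith)) le_rfl).mono hsub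
      ).intervalIntegrable_of_Icc hab

theorem intervalIntegral.integral_comp_derivWithin_Icc {E G : Type*} [NormedAddCommGroup E]
    [NormedSpace ℝ E] [NormedAddCommGroup G] [NormedSpace ℝ G] (F : ℝ → E → G) (y : ℝ → E)
    {a b : ℝ} (hab : a ≤ b) :
    ∫ x in a..b, F x (derivWithin y (Set.Icc a b) x) = ∫ x in a..b, F x (deriv y x) := by
  rw [integral_of_le hab, integral_of_le hab, ← MeasureTheory.restrict_Ioo_eq_restrict_Ioc]
  refine MeasureTheory.setIntegral_congr_fun measurableSet_Ioo fun x hx => ?_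
  rw [derivWithin_of_mem_nhds (Icc_mem_nhds hx.1 hx.2)]

theorem norm_mul_integral_sub_integral_le {g Y : ℝ → ℂ} {a b ε M : ℝ} (hab : a ≤ b)
    (hg : ContinuousOn g (Set.Icc a b)) (hY : ContinuousOn Y (Set.Icc a b))
    (hosc : ∀ u ∈ Set.Icc a b, ‖g a - g u‖ ≤ ε) (hM : ∀ u ∈ Set.Icc a b, ‖Y u‖ ≤ M) :
    ‖g a * (∫ u in a..b, Y u) - ∫ u in a..b, g u * Y u‖ ≤ ε * M * (b - a) := by
  have hε : 0 ≤ ε := (norm_nonneg _).trans (hosc a ⟨le_rfl, hab⟩)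
  have hgY : ContinuousOn (fun u => g u * Y u) (Set.Icc a b) := hg.mul hY
  rw [← intervalIntegral.integral_const_mul, ← intervalIntegral.integral_sub
    ((hY.intervalIntegrable_of_Icc hab).const_mul _) (hgY.intervalIntegrable_of_Icc hab)]
  have hbound : ∀ u ∈ Set.uIoc a b, ‖g a * Y u - g u * Y u‖ ≤ ε * M := by
    intro u hu
    have hu : u ∈ Set.Icc a b := Set.Ioc_subset_Icc_self (Set.uIoc_of_le hab ▸ hu)
    rw [← sub_mul, norm_mul]
    exact mul_le_mul (hosc u hu) (hM u hu) (norm_nonneg _) hε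
  simpa [abs_of_nonneg (sub_nonneg.mpr hab)] using
    intervalIntegral.norm_integral_le_of_norm_le_const hbound

theorem norm_sum_mul_integral_sub_integral_le {g Y : ℝ → ℂ} {p : ℕ → ℝ} {n : ℕ} {ε M : ℝ}
    (hp : Monotone p) (hg : ContinuousOn g (Set.Icc (p 0) (p n)))
    (hY : ContinuousOn Y (Set.Icc (p 0) (p n)))
    (hosc : ∀ k < n, ∀ u ∈ Set.Icc (p k) (p (k + 1)), ‖g (p k) - g u‖ ≤ ε)
    (hM : ∀ u ∈ Set.Icc (p 0) (p n), ‖Y u‖ ≤ M) :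
    ‖∑ k ∈ range n, g (p k) * (∫ u in p k..p (k + 1), Y u) - ∫ u in p 0..p n, g u * Y u‖ ≤
      ε * M * (p n - p 0) := by
  have hsub : ∀ k < n, Set.Icc (p k) (p (k + 1)) ⊆ Set.Icc (p 0) (p n) := fun k hk =>
    Set.Icc_subset_Icc (hp k.zero_le) (hp hk)
  have hgY : ContinuousOn (fun u => g u * Y u) (Set.Icc (p 0) (p n)) := hg.mul hY
  rw [← intervalIntegral.sum_integral_adjacent_intervals fun k hk =>
      (hgY.mono (hsub k hk)).intervalIntegrable_of_Icc (hp k.le_succ),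
    ← sum_sub_distrib, ← sum_range_sub, mul_sum]
  refine (norm_sum_le _ _).trans (sum_le_sum fun k hk => ?_)
  have hk := mem_range.mp hk
  exact norm_mul_integral_sub_integral_le (hp k.le_succ) (hg.mono (hsub k hk))
    (hY.mono (hsub k hk)) (hosc k hk) fun u hu => hM u (hsub k hk hu)

theorem natCast_mul_div_mem_Icc {t : ℝ} (ht : 0 ≤ t) {N k : ℕ} (hk : k ≤ N) :
    (k : ℝ) * t / N ∈ Set.Icc 0 t := by
  rw [mul_div_right_comm]
  exact ⟨by positivity,
    mul_le_of_le_one_left ht (div_le_one_of_le₀ (by exact_mod_cast hk) N.cast_nonneg)⟩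

theorem exists_norm_mul_sub_le_div {t : ℝ} (ht : 0 < t) {g y : ℝ → ℂ}
    (hg : ContinuousOn g (Set.Icc 0 t)) (hy : ContDiffOn ℝ 1 y (Set.Icc 0 t)) :
    ∃ C, ∀ N j : ℕ, j < N →
      ‖g (j * t / N) * (y ((j + 1) * t / N) - y (j * t / N))‖ ≤ C / N := by
  obtain ⟨G, hG⟩ := isCompact_Icc.exists_bound_of_continuousOn hg
  obtain ⟨M, hM⟩ := isCompact_Icc.exists_bound_of_continuousOn
    (hy.continuousOn_derivWithin (uniqueDiffOn_Icc ht) le_rfl)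
  have hG0 : 0 ≤ G := (norm_nonneg _).trans (hG 0 ⟨le_rfl, ht.le⟩)
  refine ⟨G * (M * t), fun N j hj => ?_⟩
  have hs : (j : ℝ) * t / N ∈ Set.Icc 0 t := natCast_mul_div_mem_Icc ht.le hj.le
  have hs' : ((j : ℝ) + 1) * t / N ∈ Set.Icc 0 t := by
    exact_mod_cast natCast_mul_div_mem_Icc ht.le (Nat.succ_le_of_lt hj)
  have hlip := (convex_Icc 0 t).norm_image_sub_le_of_norm_derivWithin_le
    (hy.differentiableOn one_ne_zero) hM hs hs'
  rw [show ((j : ℝ) + 1) * t / N - j * t / N = t / N by ring,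
    Real.norm_of_nonneg (by positivity)] at hlip
  calc _ = ‖g (j * t / N)‖ * ‖y ((j + 1) * t / N) - y (j * t / N)‖ := norm_mul _ _
    _ ≤ G * (M * (t / N)) := mul_le_mul (hG _ hs) hlip (norm_nonneg _) hG0
    _ = G * (M * t) / N := by ring

theorem tendsto_sum_mul_sub_uniform_partition {t : ℝ} (ht : 0 < t) {g y : ℝ → ℂ}
    (hg : ContinuousOn g (Set.Icc 0 t)) (hy : ContDiffOn ℝ 1 y (Set.Icc 0 t)) :
    Tendsto (fun N : ℕ => ∑ j ∈ range N, g (j * t / N) * (y ((j + 1) * t / N) - y (j * t / N)))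
      atTop (𝓝 (∫ s in 0..t, g s * deriv y s)) := by
  set Y := derivWithin y (Set.Icc 0 t)
  have hY : ContinuousOn Y (Set.Icc 0 t) :=
    hy.continuousOn_derivWithin (uniqueDiffOn_Icc ht) le_rfl
  obtain ⟨M, hM⟩ := isCompact_Icc.exists_bound_of_continuousOn hY
  have hM0 : 0 ≤ M := (norm_nonneg _).trans (hM 0 ⟨le_rfl, ht.le⟩)
  rw [← intervalIntegral.integral_comp_derivWithin_Icc (fun s v => g s * v) y ht.le]
  refine Metric.tendsto_nhds.mpr fun ε hε => ?_
  set ε' := ε / (M * t + 1)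
  obtain ⟨δ, hδ, hgδ⟩ := Metric.uniformContinuousOn_iff_le.mp
    (isCompact_Icc.uniformContinuousOn_of_continuous hg) ε' (by positivity)
  filter_upwards [(tendsto_const_div_atTop_nhds_zero_nat t).eventually_le_const hδ,
    eventually_gt_atTop 0] with N hN hN0
  set p : ℕ → ℝ := fun k => k * t / N
  have hp : Monotone p := fun k l hkl => by simp only [p]; gcongr
  have hpmem : ∀ k ≤ N, p k ∈ Set.Icc 0 t := fun k hk => natCast_mul_div_mem_Icc ht.le hk
  have hp0 : p 0 = 0 := by simp [p]
  have hpN : p N = t := by simp only [p]; field_simp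
  have hsum : ∑ j ∈ range N, g (j * t / N) * (y ((j + 1) * t / N) - y (j * t / N)) =
      ∑ k ∈ range N, g (p k) * ∫ u in p k..p (k + 1), Y u := by
    refine sum_congr rfl fun k hk => ?_
    have hk := mem_range.mp hk
    rw [hy.integral_derivWithin_Icc_eq_sub (hpmem k hk.le).1 (hp k.le_succ) (hpmem (k + 1) hk).2]
    simp [p]
  have hosc : ∀ k < N, ∀ u ∈ Set.Icc (p k) (p (k + 1)), ‖g (p k) - g u‖ ≤ ε' := by
    intro k hk u hu
    rw [← dist_eq_norm]
    refine hgδ _ (hpmem k hk.le) _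
      ⟨(hpmem k hk.le).1.trans hu.1, hu.2.trans (hpmem (k + 1) hk).2⟩ ?_
    have hstep : p (k + 1) - p k = t / N := by simp only [p]; push_cast; ring
    rw [Real.dist_eq, abs_sub_comm, abs_of_nonneg (sub_nonneg.mpr hu.1)]
    linarith [hu.2]
  have hbound := norm_sum_mul_integral_sub_integral_le hp (by rwa [hp0, hpN])
    (by rwa [hp0, hpN]) hosc (by rwa [hp0, hpN])
  rw [hp0, hpN, sub_zero] at hbound
  rw [dist_eq_norm, hsum]
  calc _ ≤ ε' * M * t := hbound
    _ = ε * (M * t / (M * t + 1)) := by ring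
    _ < ε * 1 := by gcongr; rw [div_lt_one (by positivity)]; linarith
    _ = ε := mul_one ε

theorem continuum_limit_of_no_jump_products_general (t : ℝ) (ht : 0 < t) (y : ℝ → ℂ)
    (hy : ContDiffOn ℝ 1 y (Set.Icc 0 t))
    (hnz : ∀ s ∈ Set.Icc (0 : ℝ) t, 1 + y s ^ 2 ≠ 0) :
    Tendsto
      (fun N : ℕ => ∏ j ∈ Finset.Icc 1 (N - 1),
        (1 + y ((j : ℝ) * t / N) / (1 + y ((j : ℝ) * t / N) ^ 2) *
              (y (((j : ℝ) + 1) * t / N) - y ((j : ℝ) * t / N))))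
      atTop
      (nhds (Complex.exp (∫ s in (0 : ℝ)..t, y s * deriv y s / (1 + y s ^ 2)))) := by
  set g : ℝ → ℂ := fun s => y s / (1 + y s ^ 2)
  have hg : ContinuousOn g (Set.Icc 0 t) :=
    hy.continuousOn.div (continuousOn_const.add (hy.continuousOn.pow 2)) hnz
  set a : ℕ → ℕ → ℂ := fun N j => g (j * t / N) * (y ((j + 1) * t / N) - y (j * t / N))
  obtain ⟨C, hC⟩ : ∃ C, ∀ N j : ℕ, j < N → ‖a N j‖ ≤ C / N := exists_norm_mul_sub_le_div ht hg hy
  have hfirst : Tendsto (fun N => a N 0) atTop (𝓝 0) :=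
    squeeze_zero_norm' ((eventually_gt_atTop 0).mono fun N hN => hC N 0 hN)
      (tendsto_const_div_atTop_nhds_zero_nat C)
  have hsum : Tendsto (fun N => ∑ j ∈ Finset.Icc 1 (N - 1), a N j) atTop
      (𝓝 (∫ s in 0..t, g s * deriv y s)) := by
    have hfull := (tendsto_sum_mul_sub_uniform_partition ht hg hy).sub hfirst
    rw [sub_zero] at hfull
    refine hfull.congr' ?_
    filter_upwards [eventually_gt_atTop 0] with N hN
    have hIcc : Finset.Icc 1 (N - 1) = (range N).erase 0 := by
      ext; simp only [mem_Icc, mem_erase, ne_eq, mem_range]; omega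
    rw [hIcc, sum_erase_eq_sub (by simpa using hN)]
  have hprod := tendsto_prod_one_add_of_tendsto_sum (fun N => by simp)
    (.of_forall fun N j hj => hC N j (by rw [mem_Icc] at hj; omega)) hsum
  convert hprod using 4
  simp only [g, div_mul_eq_mul_div]

theorem continuum_limit_of_no_jump_products (t : ℝ) (ht : 0 < t) (y : ℝ → ℂ)
    (hy : ContDiffOn ℝ 1 y (Set.Icc 0 t))
    (hnz : ∀ s ∈ Set.Icc (0 : ℝ) t, 1 + y s ^ 2 ≠ 0)
    (hfac : ∀ᶠ N : ℕ in atTop, ∀ j ∈ Finset.Icc 1 (N - 1),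
      1 + y ((j : ℝ) * t / N) / (1 + y ((j : ℝ) * t / N) ^ 2) *
            (y (((j : ℝ) + 1) * t / N) - y ((j : ℝ) * t / N)) ≠ 0) :
    Tendsto
      (fun N : ℕ => ∏ j ∈ Finset.Icc 1 (N - 1),
        (1 + y ((j : ℝ) * t / N) / (1 + y ((j : ℝ) * t / N) ^ 2) *
              (y (((j : ℝ) + 1) * t / N) - y ((j : ℝ) * t / N))))
      atTop
      (nhds (Complex.exp (∫ s in (0 : ℝ)..t, y s * deriv y s / (1 + y s ^ 2)))) :=
  continuum_limit_of_no_jump_products_general t ht y hy hnz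
end
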